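/- Let c > 0, b > c, Δ > 0, and let f : ℝ → ℝ be continuous with |f(t)| ≤ c for all t. Then for every s ∈ ℝ there exists a unique t > s such that ∫_{s}^{t} (f(u) + b) du = Δ; moreover this t satisfies Δ/(b+c) ≤ t − s ≤ Δ/(b−c). -/

import Mathlib

open MeasureTheory intervalIntegral

/-! Since `b - c ≤ f + b ≤ b + c` with `b - c > 0`, the integrated output
`F t = ∫_{s}^{t} (f + b)` grows at least at rate `b - c` and at most at rate `b + c`. So `F` is
strictly increasing, which gives uniqueness; `F s = 0` and `F (s + Δ/(b-c)) ≥ Δ`, so the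
intermediate value theorem gives existence; and the two rates bound `t - s`. -/

section IntervalBounds

variable {g : ℝ → ℝ} {a t m M : ℝ}

theorem mul_sub_le_integral_of_le (hat : a ≤ t) (hg : IntervalIntegrable g volume a t)
    (hm : ∀ u ∈ Set.Icc a t, m ≤ g u) : m * (t - a) ≤ ∫ u in a..t, g u := by
  have h := integral_mono_on hat intervalIntegrable_const hg hm
  rwa [intervalIntegral.integral_const, smul_eq_mul, mul_comm] at h

theorem integral_le_mul_sub_of_le (hat : a ≤ t) (hg : IntervalIntegrable g volume a t)
    (hM : ∀ u ∈ Set.Icc a t, g u ≤ M) : ∫ u in a..t, g u ≤ M * (t - a) := by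
  have h := integral_mono_on hat hg intervalIntegrable_const hM
  rwa [intervalIntegral.integral_const, smul_eq_mul, mul_comm] at h

end IntervalBounds

section PositiveIntegrand

variable {g : ℝ → ℝ} {m : ℝ}

theorem strictMono_integral_of_pos_le (hg : Continuous g) (hm₀ : 0 < m) (hm : ∀ u, m ≤ g u)
    (s : ℝ) : StrictMono fun t => ∫ u in s..t, g u := by
  intro t₁ t₂ h
  have hadd := integral_add_adjacent_intervals (hg.intervalIntegrable (μ := volume) s t₁)
    (hg.intervalIntegrable (μ := volume) t₁ t₂)
  have hgrowth := mul_sub_le_integral_of_le h.le (hg.intervalIntegrable t₁ t₂) fun u _ => hm u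
  have hpos : 0 < m * (t₂ - t₁) := mul_pos hm₀ (sub_pos.mpr h)
  dsimp only
  linarith

theorem exists_integral_eq_of_pos_le (hg : Continuous g) (hm₀ : 0 < m) (hm : ∀ u, m ≤ g u)
    (s : ℝ) {Δ : ℝ} (hΔ : 0 ≤ Δ) : ∃ t ∈ Set.Icc s (s + Δ / m), ∫ u in s..t, g u = Δ := by
  have hsT : s ≤ s + Δ / m := le_add_of_nonneg_right (div_nonneg hΔ hm₀.le)
  have hreach : Δ ≤ ∫ u in s..s + Δ / m, g u := by
    have h := mul_sub_le_integral_of_le hsT (hg.intervalIntegrable _ _) fun u _ => hm u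
    rwa [add_sub_cancel_left, mul_div_cancel₀ _ hm₀.ne'] at h
  have hcont : ContinuousOn (fun t => ∫ u in s..t, g u) (Set.Icc s (s + Δ / m)) :=
    (continuous_primitive (fun a b => hg.intervalIntegrable a b) s).continuousOn
  exact intermediate_value_Icc hsT hcont ⟨by rwa [integral_same], hreach⟩

end PositiveIntegrand

theorem iftem_next_firing_exists_unique_general
    (c b Δ : ℝ) (hbc : c < b) (hΔ : 0 < Δ)
    (f : ℝ → ℝ) (hf : Continuous f) (hbd : ∀ t, |f t| ≤ c) :
    ∀ s : ℝ,
      (∃! t : ℝ, s < t ∧ (∫ u in s..t, (f u + b)) = Δ) ∧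
      (∀ t : ℝ, s < t → (∫ u in s..t, (f u + b)) = Δ →
        Δ / (b + c) ≤ t - s ∧ t - s ≤ Δ / (b - c)) := by
  intro s
  have hg : Continuous fun u => f u + b := hf.add continuous_const
  have hlower : ∀ u, b - c ≤ f u + b := fun u => by linarith [(abs_le.mp (hbd u)).1]
  have hupper : ∀ u, f u + b ≤ b + c := fun u => by linarith [(abs_le.mp (hbd u)).2]
  have hm₀ : 0 < b - c := sub_pos.mpr hbc
  have hM₀ : 0 < b + c := by linarith [hm₀, (abs_nonneg (f 0)).trans (hbd 0)]
  refine ⟨?_, fun t hst hfire => ?_⟩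
  · obtain ⟨t, ht, hfire⟩ := exists_integral_eq_of_pos_le hg hm₀ hlower s hΔ.le
    have hst : s < t := ht.1.lt_of_ne <| by rintro rfl; simp [hΔ.ne] at hfire
    refine ⟨t, ⟨hst, hfire⟩, fun t' ⟨_, hfire'⟩ => ?_⟩
    exact (strictMono_integral_of_pos_le hg hm₀ hlower s).injective (hfire'.trans hfire.symm)
  · have h₁ := mul_sub_le_integral_of_le hst.le (hg.intervalIntegrable s t) fun u _ => hlower u
    have h₂ := integral_le_mul_sub_of_le hst.le (hg.intervalIntegrable s t) fun u _ => hupper u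
    rw [hfire] at h₁ h₂
    exact ⟨(div_le_iff₀ hM₀).mpr (by linarith), (le_div_iff₀ hm₀).mpr (by linarith)⟩

/-- If `f` is continuous with `|f| ≤ c`, and `b > c > 0`, `Δ > 0`, then from
any reset instant `s` there is a unique next firing instant `t > s` with
`∫_{s}^{t} (f(u) + b) du = Δ`; moreover any such firing instant satisfies
`Δ/(b+c) ≤ t - s ≤ Δ/(b-c)`. -/
theorem iftem_next_firing_exists_unique
    (c b Δ : ℝ) (hc : 0 < c) (hbc : c < b) (hΔ : 0 < Δ)
    (f : ℝ → ℝ) (hf : Continuous f) (hbd : ∀ t, |f t| ≤ c) :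
    ∀ s : ℝ,
      (∃! t : ℝ, s < t ∧ (∫ u in s..t, (f u + b)) = Δ) ∧
      (∀ t : ℝ, s < t → (∫ u in s..t, (f u + b)) = Δ →
        Δ / (b + c) ≤ t - s ∧ t - s ≤ Δ / (b - c)) :=
  iftem_next_firing_exists_unique_general c b Δ hbc hΔ f hf hbd
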